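/- (Explicit splitting vectors) Let k ≥ 1 and q ≥ 1 with n = k + q, and let τ_{i,j} denote the operator on H^{⊗n} swapping the i-th and j-th tensor components. Then for every b ∈ H_{k,q}: (i) v⁺ := (1/(k+1)) Σ_{l=1}^{k+1} τ_{l,k+1} b belongs to H^{⊙[k+1],∧[q−1]}, and (ii) v⁻ := (1/(q+1)) (b − Σ_{m=k+1}^{n} τ_{k,m} b) belongs to H^{⊙[k−1],∧[q+1]}; moreover each τ_{l,k+1} b (1 ≤ l ≤ k+1) and each τ_{k,m} b (k+1 ≤ m ≤ n) belongs to H^{⊙[k],∧[q]}. -/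

import Mathlib

/-!
Write `b = S_A A_{Aᶜ} c` with `A` the first `k` positions. A tensor that is already symmetric
(resp. skew-symmetric) in the positions of `a` is (skew-)symmetrised over `a ∪ {p}` by averaging
over the coset representatives `τ_{l,p}`, `l ∈ a ∪ {p}`, alone; this identifies
`v⁺ = S_{A ∪ {k+1}} b` and `v⁻ = A_{Aᶜ ∪ {k}} b`. As `b` is still skew-symmetric outside
`A ∪ {k+1}` and symmetric on `A ∖ {k}`, these lie in `H^{⊙a,∧aᶜ}` for `a = A ∪ {k+1}` and
`a = A ∖ {k}` respectively. Finally, a permutation `σ` carries `H^{⊙a,∧aᶜ}` onto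
`H^{⊙σa,∧(σa)ᶜ}`, which places the transposed vectors `τ b` in `H^{⊙[k],∧[q]}`.
-/

open scoped BigOperators

noncomputable section

variable (F : Type*) [Field F] [CharZero F] (H : Type*) [AddCommGroup H] [Module F H]

/-- The `n`-th tensor power of `H` over `F`. -/
abbrev TP (n : ℕ) : Type _ := PiTensorProduct F (fun _ : Fin n => H)

/-- The action of a permutation `σ ∈ S_n` on the `n`-th tensor power,
permuting the tensor factors. -/
def permMap (n : ℕ) (σ : Equiv.Perm (Fin n)) : TP F H n →ₗ[F] TP F H n :=
  (PiTensorProduct.reindex F (fun _ : Fin n => H) σ).toLinearMap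

/-- Identification of tensor powers of equal degrees. -/
def tpCast {m m' : ℕ} (hm : m = m') : TP F H m →ₗ[F] TP F H m' :=
  (PiTensorProduct.reindex F (fun _ : Fin m => H) (finCongr hm)).toLinearMap

/-- The permutations of `{1, …, n}` moving only positions in `a`. -/
def permsOn (n : ℕ) (a : Finset (Fin n)) : Finset (Equiv.Perm (Fin n)) :=
  Finset.univ.filter fun σ => ∀ i, i ∉ a → σ i = i

/-- `S_a`: symmetrisation over the positions in `a` (the average over all
permutations of the positions in `a`, fixing the other positions). -/
def symOn (n : ℕ) (a : Finset (Fin n)) : TP F H n →ₗ[F] TP F H n :=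
  (a.card.factorial : F)⁻¹ • ∑ σ ∈ permsOn n a, permMap F H n σ

/-- `A_a`: skew-symmetrisation over the positions in `a` (the signed average over
all permutations of the positions in `a`, fixing the other positions). -/
def altOn (n : ℕ) (a : Finset (Fin n)) : TP F H n →ₗ[F] TP F H n :=
  (a.card.factorial : F)⁻¹ • ∑ σ ∈ permsOn n a, (Equiv.Perm.sign σ : ℤ) • permMap F H n σ

/-- The first `k` positions of `{1, …, n}`. -/
def firstSet (n k : ℕ) : Finset (Fin n) := Finset.univ.filter fun i => (i : ℕ) < k

/-- The last `m` positions of `{1, …, n}`. -/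
def lastSet (n m : ℕ) : Finset (Fin n) := Finset.univ.filter fun i => n - m ≤ (i : ℕ)

/-- `H^{⊙a,∧aᶜ}`: the image of `S_a ∘ A_{aᶜ}`, the subspace of `n`-tensors symmetric in
the positions of `a` and skew-symmetric in the positions of `aᶜ`. -/
def Hgen (n : ℕ) (a : Finset (Fin n)) : Submodule F (TP F H n) :=
  LinearMap.range (symOn F H n a ∘ₗ altOn F H n aᶜ)

/-- `H_{k,n-k} = H^{⊙k} ⊗ H^{∧(n-k)}`: the subspace of `n`-tensors symmetric in the
first `k` positions and skew-symmetric in the remaining positions. -/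
def Hmix (n k : ℕ) : Submodule F (TP F H n) := Hgen F H n (firstSet n k)

/-- `H^{⊙[k],∧[n-k]}`: the span of the subspaces `H^{⊙a,∧aᶜ}` over all `k`-element
subsets `a ⊆ {1, …, n}`. -/
def HmixSpan (n k : ℕ) : Submodule F (TP F H n) :=
  ⨆ a ∈ {a : Finset (Fin n) | a.card = k}, Hgen F H n a

/-- The global operator whose restriction to `H_{k,q}` (with `m = q + 1`, `n = k + q`)
is `d̆_q`: skew-symmetrisation of the last `m` positions, scaled by `m`. -/
def dOp (n m : ℕ) : TP F H n →ₗ[F] TP F H n := (m : F) • altOn F H n (lastSet n m)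

/-- The global operator whose restriction to `H_{k-1,q+1}` (with `m = k`, `n = k + q`)
is `d̆*_q`: symmetrisation of the first `m` positions, scaled by `m`. -/
def dStarOp (n m : ℕ) : TP F H n →ₗ[F] TP F H n := (m : F) • symOn F H n (firstSet n m)

/-- The elementary element `h₁⊙…⊙h_k ⊗ x₁∧…∧x_q` of `H_{k,q} ⊆ H^{⊗(k+q)}`. -/
def elem (k q : ℕ) (h : Fin k → H) (x : Fin q → H) : TP F H (k + q) :=
  ∑ ρ : Equiv.Perm (Fin k), ∑ τ : Equiv.Perm (Fin q),
    (Equiv.Perm.sign τ : ℤ) •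
      (PiTensorProduct.tprod F (Fin.append (h ∘ ρ) (x ∘ τ)) : TP F H (k + q))


section Permutations

variable {n : ℕ} {a : Finset (Fin n)} {σ π : Equiv.Perm (Fin n)}

lemma mem_permsOn : σ ∈ permsOn n a ↔ ∀ i, i ∉ a → σ i = i := by
  simp [permsOn]

lemma mul_mem_permsOn (hσ : σ ∈ permsOn n a) (hπ : π ∈ permsOn n a) :
    σ * π ∈ permsOn n a :=
  mem_permsOn.2 fun i hi => by
    rw [Equiv.Perm.mul_apply, mem_permsOn.1 hπ i hi, mem_permsOn.1 hσ i hi]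

lemma inv_mem_permsOn (hσ : σ ∈ permsOn n a) : σ⁻¹ ∈ permsOn n a :=
  mem_permsOn.2 fun i hi => by
    rw [Equiv.Perm.inv_eq_iff_eq, mem_permsOn.1 hσ i hi]

lemma permsOn_mono {b : Finset (Fin n)} (h : a ⊆ b) : permsOn n a ⊆ permsOn n b :=
  fun _ hσ => mem_permsOn.2 fun i hi => mem_permsOn.1 hσ i fun hia => hi (h hia)

lemma swap_mem_permsOn {i j : Fin n} (hi : i ∈ a) (hj : j ∈ a) :
    Equiv.swap i j ∈ permsOn n a :=
  mem_permsOn.2 fun _ hl =>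
    Equiv.swap_apply_of_ne_of_ne (by rintro rfl; exact hl hi) (by rintro rfl; exact hl hj)

lemma apply_mem_of_mem_permsOn (hσ : σ ∈ permsOn n a) {i : Fin n} (hi : i ∈ a) : σ i ∈ a := by
  by_contra h
  rw [σ.injective (mem_permsOn.1 hσ _ h)] at h
  exact h hi

lemma map_eq_self_of_mem_permsOn {b : Finset (Fin n)} (hσ : σ ∈ permsOn n b)
    (hab : Disjoint a b) : a.map σ.toEmbedding = a := by
  ext i
  have hσ' := inv_mem_permsOn hσ
  rw [Finset.mem_map_equiv]
  change σ⁻¹ i ∈ a ↔ i ∈ a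
  by_cases hib : i ∈ b
  · exact iff_of_false (Finset.disjoint_right.1 hab (apply_mem_of_mem_permsOn hσ' hib))
      (Finset.disjoint_right.1 hab hib)
  · rw [mem_permsOn.1 hσ' i hib]

lemma card_permsOn (a : Finset (Fin n)) : (permsOn n a).card = a.card.factorial := by
  rw [permsOn, ← Fintype.card_subtype,
    ← Fintype.card_congr (Equiv.Perm.subtypeEquivSubtypePerm (· ∈ a)), Fintype.card_perm,
    Fintype.card_coe]

lemma map_compl_perm (σ : Equiv.Perm (Fin n)) (a : Finset (Fin n)) :
    aᶜ.map σ.toEmbedding = (a.map σ.toEmbedding)ᶜ := by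
  ext i
  simp [Finset.mem_map_equiv]

lemma conj_mem_permsOn_map_iff :
    σ * π * σ⁻¹ ∈ permsOn n (a.map σ.toEmbedding) ↔ π ∈ permsOn n a := by
  simp only [mem_permsOn, Finset.mem_map_equiv, Equiv.Perm.mul_apply]
  constructor
  · intro h i hi
    simpa using h (σ i) (by simpa using hi)
  · intro h i hi
    rw [Equiv.Perm.inv_def, h _ hi, Equiv.apply_symm_apply]

lemma swap_apply_mul_mem_permsOn {p : Fin n} (hσ : σ ∈ permsOn n (insert p a)) :
    Equiv.swap (σ p) p * σ ∈ permsOn n a := by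
  refine mem_permsOn.2 fun i hi => ?_
  rw [Equiv.Perm.mul_apply]
  by_cases hip : i = p
  · subst hip
    exact Equiv.swap_apply_left _ _
  · have hσi := mem_permsOn.1 hσ i (by simp [hi, hip])
    rw [hσi]
    exact Equiv.swap_apply_of_ne_of_ne (fun h => hip (σ.injective (hσi.trans h))) hip

/-- The transpositions `swap l p`, `l ∈ insert p a`, are representatives of the left cosets of
`permsOn n a` in `permsOn n (insert p a)`. -/
lemma sum_permsOn_insert {M : Type*} [AddCommMonoid M] {p : Fin n} (hp : p ∉ a)
    (f : Equiv.Perm (Fin n) → M) :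
    ∑ σ ∈ permsOn n (insert p a), f σ =
      ∑ l ∈ insert p a, ∑ π ∈ permsOn n a, f (Equiv.swap l p * π) := by
  rw [← Finset.sum_product']
  refine Finset.sum_nbij' (fun σ => (σ p, Equiv.swap (σ p) p * σ))
    (fun lπ => Equiv.swap lπ.1 p * lπ.2) ?_ ?_ ?_ ?_ ?_
  · intro σ hσ
    exact Finset.mem_product.2
      ⟨apply_mem_of_mem_permsOn hσ (Finset.mem_insert_self p a), swap_apply_mul_mem_permsOn hσ⟩
  · rintro ⟨l, π⟩ h
    obtain ⟨hl, hπ⟩ := Finset.mem_product.1 h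
    exact mul_mem_permsOn (swap_mem_permsOn hl (Finset.mem_insert_self p a))
      (permsOn_mono (Finset.subset_insert p a) hπ)
  · intro σ _
    simp [← mul_assoc]
  · rintro ⟨l, π⟩ h
    have hπp : π p = p := mem_permsOn.1 (Finset.mem_product.1 h).2 p hp
    simp [Equiv.Perm.mul_apply, hπp, ← mul_assoc]
  · intro σ _
    simp [← mul_assoc]

end Permutations

lemma zsmul_units_zsmul_self {M : Type*} [AddCommGroup M] (u : ℤˣ) (x : M) :
    (u : ℤ) • (u : ℤ) • x = x := by
  rw [smul_smul, ← Units.val_mul, Int.units_mul_self, Units.val_one, one_smul]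

section PermutationAction

omit [CharZero F]

variable {n : ℕ}

/-- `symOn` and `altOn` are the normalisations of this sum for `χ = 1` and `χ = sign`. -/
def twistedSum (χ : Equiv.Perm (Fin n) →* ℤˣ) (a : Finset (Fin n)) :
    TP F H n →ₗ[F] TP F H n :=
  ∑ σ ∈ permsOn n a, (χ σ : ℤ) • permMap F H n σ

variable {F H} {a : Finset (Fin n)} {χ : Equiv.Perm (Fin n) →* ℤˣ} {σ : Equiv.Perm (Fin n)}
  {x : TP F H n}

lemma permMap_mul_apply (σ τ : Equiv.Perm (Fin n)) (x : TP F H n) :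
    permMap F H n (σ * τ) x = permMap F H n σ (permMap F H n τ x) := by
  rw [show σ * τ = τ.trans σ from rfl, permMap, ← PiTensorProduct.reindex_trans]
  rfl

lemma permMap_one_apply (x : TP F H n) : permMap F H n 1 x = x := by
  rw [permMap, Equiv.Perm.one_def, PiTensorProduct.reindex_refl]
  rfl

lemma twistedSum_apply (χ : Equiv.Perm (Fin n) →* ℤˣ) (a : Finset (Fin n)) (x : TP F H n) :
    twistedSum F H χ a x = ∑ σ ∈ permsOn n a, (χ σ : ℤ) • permMap F H n σ x := by
  simp [twistedSum]

lemma permMap_twistedSum_of_mem (hσ : σ ∈ permsOn n a) :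
    permMap F H n σ (twistedSum F H χ a x) = (χ σ : ℤ) • twistedSum F H χ a x := by
  simp only [twistedSum_apply, map_sum, map_zsmul, ← permMap_mul_apply]
  rw [← Finset.sum_zsmul]
  refine Finset.sum_equiv (Equiv.mulLeft σ) (fun π => ?_) fun π _ => ?_
  · exact ⟨mul_mem_permsOn hσ, fun h => by simpa using mul_mem_permsOn (inv_mem_permsOn hσ) h⟩
  · rw [Equiv.coe_mulLeft, map_mul, Units.val_mul, ← smul_smul, zsmul_units_zsmul_self]

lemma permMap_twistedSum :
    permMap F H n σ (twistedSum F H χ a x) =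
      twistedSum F H χ (a.map σ.toEmbedding) (permMap F H n σ x) := by
  simp only [twistedSum_apply, map_sum, map_zsmul, ← permMap_mul_apply]
  refine Finset.sum_equiv (MulAut.conj σ).toEquiv (fun π => conj_mem_permsOn_map_iff.symm)
    fun π _ => ?_
  simp only [MulEquiv.toEquiv_eq_coe, MulEquiv.coe_toEquiv, MulAut.conj_apply, map_mul, map_inv,
    mul_inv_cancel_comm, inv_mul_cancel_right]

lemma twistedSum_apply_of_forall (hx : ∀ π ∈ permsOn n a, permMap F H n π x = (χ π : ℤ) • x) :
    twistedSum F H χ a x = (a.card.factorial : F) • x := by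
  rw [twistedSum_apply, Finset.sum_congr rfl fun π hπ => by rw [hx π hπ, zsmul_units_zsmul_self],
    Finset.sum_const, card_permsOn, Nat.cast_smul_eq_nsmul]

lemma twistedSum_insert_apply {p : Fin n} (hp : p ∉ a)
    (hx : ∀ π ∈ permsOn n a, permMap F H n π x = (χ π : ℤ) • x) :
    twistedSum F H χ (insert p a) x = (a.card.factorial : F) •
      ∑ l ∈ insert p a, (χ (Equiv.swap l p) : ℤ) • permMap F H n (Equiv.swap l p) x := by
  rw [twistedSum_apply, sum_permsOn_insert hp, Finset.smul_sum]
  refine Finset.sum_congr rfl fun l _ => ?_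
  rw [Finset.sum_congr rfl fun π hπ => by
      rw [permMap_mul_apply, hx π hπ, map_zsmul, map_mul, Units.val_mul, ← smul_smul,
        zsmul_units_zsmul_self],
    Finset.sum_const, card_permsOn, Nat.cast_smul_eq_nsmul]

lemma symOn_apply_eq (a : Finset (Fin n)) (x : TP F H n) :
    symOn F H n a x = (a.card.factorial : F)⁻¹ • twistedSum F H 1 a x := by
  simp [symOn, twistedSum_apply]

lemma altOn_apply_eq (a : Finset (Fin n)) (x : TP F H n) :
    altOn F H n a x = (a.card.factorial : F)⁻¹ • twistedSum F H Equiv.Perm.sign a x := by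
  simp [altOn, twistedSum_apply]

lemma permMap_symOn_of_mem (hσ : σ ∈ permsOn n a) :
    permMap F H n σ (symOn F H n a x) = symOn F H n a x := by
  rw [symOn_apply_eq, map_smul, permMap_twistedSum_of_mem hσ]
  simp

lemma permMap_altOn_of_mem (hσ : σ ∈ permsOn n a) :
    permMap F H n σ (altOn F H n a x) = (Equiv.Perm.sign σ : ℤ) • altOn F H n a x := by
  rw [altOn_apply_eq, map_smul, permMap_twistedSum_of_mem hσ, smul_comm]

lemma permMap_symOn :
    permMap F H n σ (symOn F H n a x) =
      symOn F H n (a.map σ.toEmbedding) (permMap F H n σ x) := by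
  rw [symOn_apply_eq, symOn_apply_eq, map_smul, permMap_twistedSum, Finset.card_map]

lemma permMap_altOn :
    permMap F H n σ (altOn F H n a x) =
      altOn F H n (a.map σ.toEmbedding) (permMap F H n σ x) := by
  rw [altOn_apply_eq, altOn_apply_eq, map_smul, permMap_twistedSum, Finset.card_map]

variable {b : TP F H n}

lemma permMap_mem_Hgen (hb : b ∈ Hgen F H n a) (σ : Equiv.Perm (Fin n)) :
    permMap F H n σ b ∈ Hgen F H n (a.map σ.toEmbedding) := by
  obtain ⟨c, rfl⟩ := hb
  refine ⟨permMap F H n σ c, ?_⟩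
  simp only [LinearMap.comp_apply, permMap_symOn, permMap_altOn, map_compl_perm]

lemma permMap_eq_of_mem_Hgen (hb : b ∈ Hgen F H n a) (hσ : σ ∈ permsOn n a) :
    permMap F H n σ b = b := by
  obtain ⟨c, rfl⟩ := hb
  exact permMap_symOn_of_mem hσ

lemma permMap_eq_sign_smul_of_mem_Hgen (hb : b ∈ Hgen F H n a) (hσ : σ ∈ permsOn n aᶜ) :
    permMap F H n σ b = (Equiv.Perm.sign σ : ℤ) • b := by
  obtain ⟨c, rfl⟩ := hb
  rw [LinearMap.comp_apply, permMap_symOn, map_eq_self_of_mem_permsOn hσ disjoint_compl_right,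
    permMap_altOn_of_mem hσ, map_zsmul]

lemma mem_HmixSpan_of_mem_Hgen {m : ℕ} (hb : b ∈ Hgen F H n a) (ha : a.card = m) :
    b ∈ HmixSpan F H n m :=
  (le_iSup₂_of_le a ha le_rfl : Hgen F H n a ≤ HmixSpan F H n m) hb

end PermutationAction

lemma inv_factorial_succ_mul_factorial (m : ℕ) :
    ((m + 1).factorial : F)⁻¹ * m.factorial = ((m : F) + 1)⁻¹ := by
  rw [Nat.factorial_succ, Nat.cast_mul, mul_inv, mul_assoc,
    inv_mul_cancel₀ (Nat.cast_ne_zero.2 m.factorial_ne_zero), mul_one]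
  push_cast
  rfl

section Projections

variable {F H} {n : ℕ} {a a' : Finset (Fin n)} {x b : TP F H n}

lemma symOn_apply_of_forall (hx : ∀ π ∈ permsOn n a, permMap F H n π x = x) :
    symOn F H n a x = x := by
  rw [symOn_apply_eq, twistedSum_apply_of_forall (by simpa using hx),
    inv_smul_smul₀ (Nat.cast_ne_zero.2 a.card.factorial_ne_zero)]

lemma altOn_apply_of_forall
    (hx : ∀ π ∈ permsOn n a, permMap F H n π x = (Equiv.Perm.sign π : ℤ) • x) :
    altOn F H n a x = x := by
  rw [altOn_apply_eq, twistedSum_apply_of_forall hx,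
    inv_smul_smul₀ (Nat.cast_ne_zero.2 a.card.factorial_ne_zero)]

lemma symOn_insert_apply {p : Fin n} (hp : p ∉ a)
    (hx : ∀ π ∈ permsOn n a, permMap F H n π x = x) :
    symOn F H n (insert p a) x =
      ((a.card : F) + 1)⁻¹ • ∑ l ∈ insert p a, permMap F H n (Equiv.swap l p) x := by
  rw [symOn_apply_eq, twistedSum_insert_apply hp (by simpa using hx),
    Finset.card_insert_of_notMem hp, smul_smul, inv_factorial_succ_mul_factorial]
  simp

lemma altOn_insert_apply {p : Fin n} (hp : p ∉ a)
    (hx : ∀ π ∈ permsOn n a, permMap F H n π x = (Equiv.Perm.sign π : ℤ) • x) :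
    altOn F H n (insert p a) x =
      ((a.card : F) + 1)⁻¹ • (x - ∑ l ∈ a, permMap F H n (Equiv.swap l p) x) := by
  rw [altOn_apply_eq, twistedSum_insert_apply hp hx, Finset.card_insert_of_notMem hp, smul_smul,
    inv_factorial_succ_mul_factorial, Finset.sum_insert hp, Equiv.swap_self, ← Equiv.Perm.one_def,
    Finset.sum_congr rfl fun l hl => by
      rw [Equiv.Perm.sign_swap (ne_of_mem_of_not_mem hl hp)]]
  simp [permMap_one_apply, sub_eq_add_neg]

lemma symOn_mem_Hgen (hb : b ∈ Hgen F H n a) (h : a ⊆ a') :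
    symOn F H n a' b ∈ Hgen F H n a' := by
  refine ⟨b, ?_⟩
  rw [LinearMap.comp_apply, altOn_apply_of_forall fun π hπ =>
    permMap_eq_sign_smul_of_mem_Hgen hb (permsOn_mono (Finset.compl_subset_compl.2 h) hπ)]

lemma altOn_compl_mem_Hgen (hb : b ∈ Hgen F H n a) (h : a' ⊆ a) :
    altOn F H n a'ᶜ b ∈ Hgen F H n a' := by
  refine ⟨b, symOn_apply_of_forall fun π hπ => ?_⟩
  rw [permMap_altOn, map_eq_self_of_mem_permsOn hπ disjoint_compl_left,
    permMap_eq_of_mem_Hgen hb (permsOn_mono h hπ)]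

end Projections

section Positions

variable {n k m : ℕ}

@[simp]
lemma mem_firstSet {i : Fin n} : i ∈ firstSet n k ↔ (i : ℕ) < k := by
  simp [firstSet]

@[simp]
lemma mem_lastSet {i : Fin n} : i ∈ lastSet n m ↔ n - m ≤ (i : ℕ) := by
  simp [lastSet]

lemma card_firstSet (h : k ≤ n) : (firstSet n k).card = k := by
  rw [firstSet, Fin.card_filter_val_lt, min_eq_right h]

lemma firstSet_mono {k' : ℕ} (h : k ≤ k') : firstSet n k ⊆ firstSet n k' :=
  fun _ hi => mem_firstSet.2 ((mem_firstSet.1 hi).trans_le h)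

lemma compl_firstSet (h : k + m = n) : (firstSet n k)ᶜ = lastSet n m := by
  ext i
  simp only [Finset.mem_compl, mem_firstSet, mem_lastSet]
  omega

lemma insert_firstSet {i : Fin n} (hi : (i : ℕ) = k) :
    insert i (firstSet n k) = firstSet n (k + 1) := by
  ext j
  simp only [Finset.mem_insert, mem_firstSet, Fin.ext_iff]
  omega

lemma insert_lastSet {i : Fin n} (hi : (i : ℕ) + m + 1 = n) :
    insert i (lastSet n m) = lastSet n (m + 1) := by
  ext j
  simp only [Finset.mem_insert, mem_lastSet, Fin.ext_iff]
  omega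

lemma firstSet_eq_map_castLEEmb (h : k ≤ n) :
    firstSet n k = Finset.univ.map (Fin.castLEEmb h) := by
  ext i
  simp only [mem_firstSet, Finset.mem_map, Finset.mem_univ, true_and, Fin.coe_castLEEmb,
    Fin.ext_iff, Fin.val_castLE]
  exact ⟨fun hi => ⟨⟨i, hi⟩, rfl⟩, fun ⟨j, hj⟩ => hj ▸ j.isLt⟩

lemma lastSet_eq_map_natAddEmb {q : ℕ} :
    lastSet (k + q) q = Finset.univ.map (Fin.natAddEmb k) := by
  ext i
  simp only [mem_lastSet, Finset.mem_map, Finset.mem_univ, true_and, Fin.natAddEmb_apply,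
    Fin.ext_iff, Fin.val_natAdd]
  exact ⟨fun hi => ⟨⟨i - k, by omega⟩, by simp only; omega⟩, fun ⟨j, hj⟩ => by omega⟩

end Positions

section SplittingVectors

variable {F H} {k q : ℕ}

lemma symOn_firstSet_succ_apply {n : ℕ} (hk : k < n) {b : TP F H n} (hb : b ∈ Hmix F H n k) :
    symOn F H n (firstSet n (k + 1)) b = ((k : F) + 1)⁻¹ •
      ∑ l : Fin (k + 1), permMap F H n (Equiv.swap ⟨l, by omega⟩ ⟨k, hk⟩) b := by
  have hp : (⟨k, hk⟩ : Fin n) ∉ firstSet n k := by simp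
  rw [← insert_firstSet (i := ⟨k, hk⟩) rfl,
    symOn_insert_apply hp fun π hπ => permMap_eq_of_mem_Hgen hb hπ, card_firstSet hk.le,
    insert_firstSet rfl, firstSet_eq_map_castLEEmb hk, Finset.sum_map]
  rfl

lemma altOn_lastSet_succ_apply (hk : 1 ≤ k) {b : TP F H (k + q)} (hb : b ∈ Hmix F H (k + q) k) :
    altOn F H (k + q) (lastSet (k + q) (q + 1)) b = ((q : F) + 1)⁻¹ •
      (b - ∑ m : Fin q,
        permMap F H (k + q) (Equiv.swap ⟨k - 1, by omega⟩ ⟨k + m, by omega⟩) b) := by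
  have hp : (⟨k - 1, by omega⟩ : Fin (k + q)) ∉ lastSet (k + q) q := by
    simp only [mem_lastSet]
    omega
  have hanti : ∀ π ∈ permsOn (k + q) (lastSet (k + q) q),
      permMap F H (k + q) π b = (Equiv.Perm.sign π : ℤ) • b := fun π hπ =>
    permMap_eq_sign_smul_of_mem_Hgen hb (by rwa [compl_firstSet rfl])
  rw [← insert_lastSet (i := ⟨k - 1, by omega⟩) (by simp only; omega), altOn_insert_apply hp hanti,
    lastSet_eq_map_natAddEmb, Finset.card_map, Finset.card_univ, Fintype.card_fin, Finset.sum_map]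
  simp only [Equiv.swap_comm _ (⟨k - 1, _⟩ : Fin (k + q))]
  rfl

end SplittingVectors

-- Positions are 0-indexed: `τ_{l,k+1}` is `swap l k` and `τ_{k,m}` is `swap (k-1) (k+m)`.
/-- Explicit splitting vectors: for `k ≥ 1`, `q ≥ 1` with `n = k + q`,
writing `τ_{i,j}` for the transposition of the `i`-th and `j`-th tensor components
(1-indexed in the informal statement, 0-indexed below), for every `b ∈ H_{k,q}`:
(i) `v⁺ = (1/(k+1)) Σ_{l=1}^{k+1} τ_{l,k+1} b ∈ H^{⊙[k+1],∧[q-1]}`;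
(ii) `v⁻ = (1/(q+1)) (b − Σ_{m=k+1}^{n} τ_{k,m} b) ∈ H^{⊙[k-1],∧[q+1]}`;
moreover each `τ_{l,k+1} b` and each `τ_{k,m} b` belongs to `H^{⊙[k],∧[q]}`. -/
theorem splitting_vectors (k q : ℕ) (hk : 1 ≤ k) (hq : 1 ≤ q) :
    ∀ b ∈ Hmix F H (k + q) k,
      (((k : F) + 1)⁻¹ •
          ∑ l : Fin (k + 1),
            permMap F H (k + q)
              (Equiv.swap ⟨(l : ℕ), by have := l.isLt; omega⟩ ⟨k, by omega⟩) b ∈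
        HmixSpan F H (k + q) (k + 1)) ∧
      (((q : F) + 1)⁻¹ •
          (b - ∑ m : Fin q,
            permMap F H (k + q)
              (Equiv.swap ⟨k - 1, by omega⟩ ⟨k + (m : ℕ), by have := m.isLt; omega⟩) b) ∈
        HmixSpan F H (k + q) (k - 1)) ∧
      (∀ l : Fin (k + 1),
        permMap F H (k + q)
            (Equiv.swap ⟨(l : ℕ), by have := l.isLt; omega⟩ ⟨k, by omega⟩) b ∈
          HmixSpan F H (k + q) k) ∧
      (∀ m : Fin q,
        permMap F H (k + q)
            (Equiv.swap ⟨k - 1, by omega⟩ ⟨k + (m : ℕ), by have := m.isLt; omega⟩) b ∈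
          HmixSpan F H (k + q) k) := by
  intro b hb
  have hperm : ∀ σ, permMap F H (k + q) σ b ∈ HmixSpan F H (k + q) k := fun σ =>
    mem_HmixSpan_of_mem_Hgen (permMap_mem_Hgen hb σ)
      (by rw [Finset.card_map, card_firstSet (by omega)])
  refine ⟨?_, ?_, fun _ => hperm _, fun _ => hperm _⟩
  · rw [← symOn_firstSet_succ_apply (by omega) hb]
    exact mem_HmixSpan_of_mem_Hgen (symOn_mem_Hgen hb (firstSet_mono k.le_succ))
      (card_firstSet (by omega))
  · rw [← altOn_lastSet_succ_apply hk hb, ← compl_firstSet (k := k - 1) (by omega)]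
    exact mem_HmixSpan_of_mem_Hgen (altOn_compl_mem_Hgen hb (firstSet_mono (Nat.sub_le k 1)))
      (card_firstSet (by omega))

end
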